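/- Let K be a Hopf *-algebra with twist F satisfying F^{*⊗*} = (S⊗S)(F₂₁), and A a K-module *-algebra. Then the original involution * of A is antimultiplicative for the twisted product: (a •_F b)* = b* •_F a*, where a •_F b = (F̄ᵅ▷a)(F̄_α▷b). -/

import Mathlib

/-!
Applying `*` to `(F̄ᵅ ▷ a)(F̄_α ▷ b)` and using `(k ▷ a)* = S⁻¹(k*) ▷ a*` gives
`b* •_{ψ F̄} a*`, where `ψ t = ((S⁻¹ ⊗ S⁻¹)(t^{*⊗*}))₂₁` (`starFlip`). Since
`S⁻¹(k*) ▷ ·` is the conjugate of `k ▷ ·` by the involution of `A`, `t ↦ ψ t ▷ ·` is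
multiplicative on `A ⊗ A`, and the hypothesis on `F` says exactly `ψ F = F`. Hence `ψ F̄` and
`F̄` act on `A ⊗ A` as a left and a right inverse of the action of `F`, so they act alike.
-/

noncomputable section
open TensorProduct

variable (𝕜 : Type*) [CommRing 𝕜]
variable (K : Type*) [Ring K] [HopfAlgebra 𝕜 K]
/-- `Δ ⊗ id` as an algebra map `K ⊗ K → K ⊗ (K ⊗ K)`. -/
def comul12 : K ⊗[𝕜] K →ₐ[𝕜] K ⊗[𝕜] (K ⊗[𝕜] K) :=
  (Algebra.TensorProduct.assoc 𝕜 𝕜 𝕜 K K K).toAlgHom.comp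
    (Algebra.TensorProduct.map (Bialgebra.comulAlgHom 𝕜 K) (AlgHom.id 𝕜 K))

/-- `id ⊗ Δ`. -/
def comul23 : K ⊗[𝕜] K →ₐ[𝕜] K ⊗[𝕜] (K ⊗[𝕜] K) :=
  Algebra.TensorProduct.map (AlgHom.id 𝕜 K) (Bialgebra.comulAlgHom 𝕜 K)

/-- `x ⊗ y ↦ x ⊗ y ⊗ 1`. -/
def ins12 : K ⊗[𝕜] K →ₐ[𝕜] K ⊗[𝕜] (K ⊗[𝕜] K) :=
  Algebra.TensorProduct.map (AlgHom.id 𝕜 K) Algebra.TensorProduct.includeLeft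

/-- `x ⊗ y ↦ 1 ⊗ x ⊗ y`. -/
def ins23 : K ⊗[𝕜] K →ₐ[𝕜] K ⊗[𝕜] (K ⊗[𝕜] K) :=
  Algebra.TensorProduct.includeRight

/-- `x ⊗ y ↦ x ⊗ 1 ⊗ y`. -/
def ins13 : K ⊗[𝕜] K →ₐ[𝕜] K ⊗[𝕜] (K ⊗[𝕜] K) :=
  Algebra.TensorProduct.map (AlgHom.id 𝕜 K) Algebra.TensorProduct.includeRight

/-- Quasitriangular structure: `R` invertible with inverse `Ri`,
quasi-cocommutativity `τ(Δ k) R = R Δ k`, and the two hexagon relations. -/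
structure QuasiTri (R Ri : K ⊗[𝕜] K) : Prop where
  mul_inv : R * Ri = 1
  inv_mul : Ri * R = 1
  quasi : ∀ k : K, (TensorProduct.comm 𝕜 K K) (Coalgebra.comul k) * R
      = R * (Coalgebra.comul k : K ⊗[𝕜] K)
  hex1 : comul12 𝕜 K R = ins13 𝕜 K R * ins23 𝕜 K R
  hex2 : comul23 𝕜 K R = ins13 𝕜 K R * ins12 𝕜 K R
/-- `(ε ⊗ id)`. -/
def epsLlin : K ⊗[𝕜] K →ₗ[𝕜] K :=
  (TensorProduct.lid 𝕜 K).toLinearMap.comp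
    (TensorProduct.map (Coalgebra.counit : K →ₗ[𝕜] 𝕜) LinearMap.id)

/-- `(id ⊗ ε)`. -/
def epsRlin : K ⊗[𝕜] K →ₗ[𝕜] K :=
  (TensorProduct.rid 𝕜 K).toLinearMap.comp
    (TensorProduct.map LinearMap.id (Coalgebra.counit : K →ₗ[𝕜] 𝕜))

/-- A Drinfeld twist `F` (with inverse `Fi`) for the bialgebra `K`:
invertible, unital, and satisfying the cocycle condition
`(F ⊗ 1)(Δ ⊗ id)(F) = (1 ⊗ F)(id ⊗ Δ)(F)`. -/
structure IsTwist (F Fi : K ⊗[𝕜] K) : Prop where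
  mul_inv : F * Fi = 1
  inv_mul : Fi * F = 1
  unitalL : epsLlin 𝕜 K F = 1
  unitalR : epsRlin 𝕜 K F = 1
  cocycle : ins12 𝕜 K F * comul12 𝕜 K F = ins23 𝕜 K F * comul23 𝕜 K F

/-- The twisted coproduct `Δ_F(k) = F Δ(k) F⁻¹`. -/
def twistComul (F Fi : K ⊗[𝕜] K) : K →ₗ[𝕜] K ⊗[𝕜] K :=
  (LinearMap.mulLeft 𝕜 F).comp
    ((LinearMap.mulRight 𝕜 Fi).comp (Coalgebra.comul : K →ₗ[𝕜] K ⊗[𝕜] K))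
/-- Given an action `β` of `K` and a bilinear operation `μ` on `M`, the map
sending `t = Σ k₁ ⊗ k₂` and `a, b` to `Σ μ (k₁ ▷ a) (k₂ ▷ b)` (Sweedler-style
combination). -/
def sweedlerOp {M : Type*} [AddCommGroup M] [Module 𝕜 M]
    (β : K →ₗ[𝕜] M →ₗ[𝕜] M) (μ : M →ₗ[𝕜] M →ₗ[𝕜] M) :
    K ⊗[𝕜] K →ₗ[𝕜] M →ₗ[𝕜] M →ₗ[𝕜] M :=
  TensorProduct.lift <| LinearMap.mk₂ 𝕜
    (fun k1 k2 => (μ.comp (β k1)).compl₂ (β k2))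
    (fun k k' l => by ext a b; simp [LinearMap.compl₂_apply, map_add])
    (fun c k l => by ext a b; simp [LinearMap.compl₂_apply, map_smul])
    (fun k l l' => by ext a b; simp [LinearMap.compl₂_apply, map_add])
    (fun c k l => by ext a b; simp [LinearMap.compl₂_apply, map_smul])

/-- A module-algebra action of the bialgebra `K` on the algebra `A`:
`act` is a representation of `K`, `k ▷ (ab) = (k₍₁₎ ▷ a)(k₍₂₎ ▷ b)` and
`k ▷ 1 = ε(k) 1`. -/
structure MAlgAction {A : Type*} [Ring A] [Algebra 𝕜 A]
    (act : K →ₗ[𝕜] A →ₗ[𝕜] A) : Prop where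
  act_act : ∀ k l : K, act (k * l) = (act k).comp (act l)
  act_one : act 1 = LinearMap.id
  act_mul : ∀ (k : K) (a b : A),
    act k (a * b) = sweedlerOp 𝕜 K act (LinearMap.mul 𝕜 A) (Coalgebra.comul k) a b
  act_unit : ∀ k : K, act k 1 = Coalgebra.counit (R := 𝕜) k • (1 : A)
section StarStructures

variable (H : Type*) [Ring H] [HopfAlgebra ℂ H] [StarRing H] [StarModule ℂ H]

/-- `starT` is the conjugate-linear extension of `x ⊗ y ↦ x* ⊗ y*` to
`H ⊗ H`. -/
structure IsStarT (starT : H ⊗[ℂ] H → H ⊗[ℂ] H) : Prop where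
  map_add : ∀ s t : H ⊗[ℂ] H, starT (s + t) = starT s + starT t
  map_smul : ∀ (c : ℂ) (t : H ⊗[ℂ] H),
    starT (c • t) = (starRingEnd ℂ c) • starT t
  map_tmul : ∀ x y : H, starT (x ⊗ₜ[ℂ] y) = star x ⊗ₜ[ℂ] star y

end StarStructures

section TensorRepresentation

variable {R K M : Type*} [CommSemiring R] [Semiring K] [Algebra R K]
  [AddCommMonoid M] [Module R M]

theorem AddMonoidHom.map_mul_of_map_mul_tmul {L B : Type*} [Semiring L] [Algebra R L]
    [NonUnitalNonAssocSemiring B] (f : K ⊗[R] L →+ B)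
    (hf : ∀ (k₁ k₂ : K) (l₁ l₂ : L),
      f ((k₁ * k₂) ⊗ₜ (l₁ * l₂)) = f (k₁ ⊗ₜ l₁) * f (k₂ ⊗ₜ l₂))
    (x y : K ⊗[R] L) : f (x * y) = f x * f y := by
  induction x using TensorProduct.induction_on with
  | zero => simp
  | add x₁ x₂ h₁ h₂ => simp only [add_mul, map_add, h₁, h₂]
  | tmul k₁ l₁ =>
    induction y using TensorProduct.induction_on with
    | zero => simp
    | add y₁ y₂ h₁ h₂ => simp only [mul_add, map_add, h₁, h₂]
    | tmul k₂ l₂ => rw [Algebra.TensorProduct.tmul_mul_tmul, hf]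

def tensorRep (ρ : K →ₐ[R] Module.End R M) : K ⊗[R] K →ₐ[R] Module.End R (M ⊗[R] M) :=
  Module.endTensorEndAlgHom.comp (Algebra.TensorProduct.map ρ ρ)

theorem tensorRep_tmul (ρ : K →ₐ[R] Module.End R M) (k l : K) :
    tensorRep ρ (k ⊗ₜ l) = TensorProduct.map (ρ k) (ρ l) :=
  rfl

end TensorRepresentation

section ModuleAlgebra

variable {𝕜 K A : Type*} [CommRing 𝕜] [Ring K] [HopfAlgebra 𝕜 K] [Ring A] [Algebra 𝕜 A]
  {act : K →ₗ[𝕜] A →ₗ[𝕜] A}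

def MAlgAction.toAlgHom (hact : MAlgAction 𝕜 K act) : K →ₐ[𝕜] Module.End 𝕜 A :=
  AlgHom.ofLinearMap act hact.act_one hact.act_act

theorem MAlgAction.toAlgHom_apply (hact : MAlgAction 𝕜 K act) (k : K) :
    hact.toAlgHom k = act k :=
  rfl

theorem sweedlerOp_mul_eq_mul'_tensorRep (hact : MAlgAction 𝕜 K act) (t : K ⊗[𝕜] K)
    (a b : A) :
    sweedlerOp 𝕜 K act (LinearMap.mul 𝕜 A) t a b
      = LinearMap.mul' 𝕜 A (tensorRep hact.toAlgHom t (a ⊗ₜ b)) := by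
  induction t using TensorProduct.induction_on with
  | zero => simp
  | tmul k l => simp [sweedlerOp, tensorRep_tmul, MAlgAction.toAlgHom_apply]
  | add u v hu hv => simp only [map_add, LinearMap.add_apply, hu, hv]

variable [StarMul K] [StarMul A] {Sinv : K →ₗ[𝕜] K}

/-- By `hstaract`, `S⁻¹(k*) ▷ ·` is the conjugate of `k ▷ ·` by the involution of `A`. -/
theorem MAlgAction.act_inv_star_mul (hact : MAlgAction 𝕜 K act)
    (hstaract : ∀ (k : K) (a : A), star (act k a) = act (Sinv (star k)) (star a)) (k l : K) :
    act (Sinv (star (k * l))) = act (Sinv (star k)) * act (Sinv (star l)) := by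
  have hconj : ∀ (k : K) (a : A), act (Sinv (star k)) a = star (act k (star a)) := by
    intro k a
    rw [hstaract, star_star]
  ext a
  rw [Module.End.mul_apply, hconj, hact.act_act, LinearMap.comp_apply, hconj, hconj, star_star]

end ModuleAlgebra

section TwistedStar

variable {H : Type*} [Ring H] [HopfAlgebra ℂ H]
  {starT : H ⊗[ℂ] H → H ⊗[ℂ] H} {Sinv : H →ₗ[ℂ] H}

def starFlip (starT : H ⊗[ℂ] H → H ⊗[ℂ] H) (Sinv : H →ₗ[ℂ] H) (t : H ⊗[ℂ] H) :
    H ⊗[ℂ] H :=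
  TensorProduct.comm ℂ H H (TensorProduct.map Sinv Sinv (starT t))

theorem starFlip_eq_self {F : H ⊗[ℂ] H}
    (hFstar : starT F
      = LinearMap.lTensor H (HopfAlgebra.antipode (R := ℂ))
          (LinearMap.rTensor H (HopfAlgebra.antipode (R := ℂ))
            ((TensorProduct.comm ℂ H H) F)))
    (hS : ∀ k : H, Sinv (HopfAlgebra.antipode ℂ k) = k) :
    starFlip starT Sinv F = F := by
  have hSS : TensorProduct.map Sinv Sinv ∘ₗ
      (LinearMap.lTensor H (HopfAlgebra.antipode ℂ) ∘ₗ
        LinearMap.rTensor H (HopfAlgebra.antipode ℂ)) = LinearMap.id := by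
    rw [LinearMap.lTensor_comp_rTensor, ← TensorProduct.map_comp,
      show Sinv ∘ₗ HopfAlgebra.antipode ℂ = LinearMap.id from LinearMap.ext hS,
      TensorProduct.map_id]
  rw [starFlip, hFstar, ← LinearMap.comp_apply (LinearMap.lTensor _ _), ← LinearMap.comp_apply,
    hSS, LinearMap.id_apply, TensorProduct.comm_comm]

variable [StarRing H]

theorem IsStarT.map_zero (hstarT : IsStarT H starT) : starT 0 = 0 := by
  simpa using hstarT.map_smul 0 0

theorem starFlip_tmul (hstarT : IsStarT H starT) (x y : H) :
    starFlip starT Sinv (x ⊗ₜ y) = Sinv (star y) ⊗ₜ Sinv (star x) := by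
  simp [starFlip, hstarT.map_tmul]

theorem starFlip_zero (hstarT : IsStarT H starT) : starFlip starT Sinv 0 = 0 := by
  simp [starFlip, hstarT.map_zero]

theorem starFlip_add (hstarT : IsStarT H starT) (s t : H ⊗[ℂ] H) :
    starFlip starT Sinv (s + t) = starFlip starT Sinv s + starFlip starT Sinv t := by
  simp [starFlip, hstarT.map_add]

def starFlipAddHom (hstarT : IsStarT H starT) (Sinv : H →ₗ[ℂ] H) :
    H ⊗[ℂ] H →+ H ⊗[ℂ] H where
  toFun := starFlip starT Sinv
  map_zero' := starFlip_zero hstarT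
  map_add' := starFlip_add hstarT

theorem starFlip_one (hstarT : IsStarT H starT)
    (hS : ∀ k : H, Sinv (HopfAlgebra.antipode ℂ k) = k) :
    starFlip starT Sinv 1 = 1 := by
  have hSinv : Sinv 1 = 1 := by simpa using hS 1
  rw [Algebra.TensorProduct.one_def, starFlip_tmul hstarT, star_one, hSinv]

variable {A : Type*} [Ring A] [Algebra ℂ A] [StarRing A] {act : H →ₗ[ℂ] A →ₗ[ℂ] A}

theorem tensorRep_starFlip_mul (hstarT : IsStarT H starT) (hact : MAlgAction ℂ H act)
    (hstaract : ∀ (k : H) (a : A), star (act k a) = act (Sinv (star k)) (star a))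
    (s t : H ⊗[ℂ] H) :
    tensorRep hact.toAlgHom (starFlip starT Sinv (s * t))
      = tensorRep hact.toAlgHom (starFlip starT Sinv s)
        * tensorRep hact.toAlgHom (starFlip starT Sinv t) :=
  ((tensorRep hact.toAlgHom).toAddMonoidHom.comp
      (starFlipAddHom hstarT Sinv)).map_mul_of_map_mul_tmul
    (fun k₁ k₂ l₁ l₂ => by
      change tensorRep _ (starFlip _ _ _)
        = tensorRep _ (starFlip _ _ _) * tensorRep _ (starFlip _ _ _)
      rw [starFlip_tmul hstarT, starFlip_tmul hstarT, starFlip_tmul hstarT, tensorRep_tmul,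
        tensorRep_tmul, tensorRep_tmul, MAlgAction.toAlgHom_apply, MAlgAction.toAlgHom_apply,
        hact.act_inv_star_mul hstaract, hact.act_inv_star_mul hstaract, TensorProduct.map_mul]
      rfl) s t

theorem star_sweedlerOp_mul (hstarT : IsStarT H starT)
    (hstaract : ∀ (k : H) (a : A), star (act k a) = act (Sinv (star k)) (star a))
    (t : H ⊗[ℂ] H) (a b : A) :
    star (sweedlerOp ℂ H act (LinearMap.mul ℂ A) t a b)
      = sweedlerOp ℂ H act (LinearMap.mul ℂ A) (starFlip starT Sinv t) (star b) (star a) := by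
  induction t using TensorProduct.induction_on with
  | zero => simp [starFlip_zero hstarT]
  | tmul k l =>
    rw [starFlip_tmul hstarT]
    simp only [sweedlerOp, TensorProduct.lift.tmul, LinearMap.mk₂_apply, LinearMap.compl₂_apply,
      LinearMap.comp_apply, LinearMap.mul_apply']
    rw [star_mul, hstaract, hstaract]
  | add u v hu hv =>
    simp only [starFlip_add hstarT, map_add, LinearMap.add_apply, star_add, hu, hv]

end TwistedStar

section Statement

variable (H : Type*) [Ring H] [HopfAlgebra ℂ H] [StarRing H] [StarModule ℂ H]

theorem twisted_product_star_antimultiplicative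
    (starT : H ⊗[ℂ] H → H ⊗[ℂ] H) (hstarT : IsStarT H starT)
    (F Fi : H ⊗[ℂ] H) (hF : IsTwist ℂ H F Fi)
    (hFstar : starT F
      = LinearMap.lTensor H (HopfAlgebra.antipode (R := ℂ))
          (LinearMap.rTensor H (HopfAlgebra.antipode (R := ℂ))
            ((TensorProduct.comm ℂ H H) F)))
    -- inverse of the antipode
    (Sinv : H →ₗ[ℂ] H)
    (hS₂ : ∀ k : H, Sinv (HopfAlgebra.antipode (R := ℂ) k) = k)
    -- `A` is an `H`-module *-algebra
    {A : Type*} [Ring A] [Algebra ℂ A] [StarRing A]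
    (act : H →ₗ[ℂ] A →ₗ[ℂ] A) (hact : MAlgAction ℂ H act)
    (hstaract : ∀ (k : H) (a : A),
      star (act k a) = act (Sinv (star k)) (star a)) :
    ∀ a b : A,
      star (sweedlerOp ℂ H act (LinearMap.mul ℂ A) Fi a b)
        = sweedlerOp ℂ H act (LinearMap.mul ℂ A) Fi (star b) (star a) := by
  intro a b
  set π := tensorRep hact.toAlgHom
  have hFlipF : starFlip starT Sinv F = F := starFlip_eq_self hFstar hS₂
  have hFlipFi : π (starFlip starT Sinv Fi) = π Fi := by
    refine left_inv_eq_right_inv (a := π F) ?_ (by rw [← map_mul, hF.mul_inv, map_one])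
    rw [← hFlipF, ← tensorRep_starFlip_mul hstarT hact hstaract, hF.inv_mul,
      starFlip_one hstarT hS₂, map_one]
  rw [star_sweedlerOp_mul hstarT hstaract, sweedlerOp_mul_eq_mul'_tensorRep hact,
    sweedlerOp_mul_eq_mul'_tensorRep hact, hFlipFi]

end Statement
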